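/- Fix integers K, M, p with 1 ≤ K ≤ p ≤ M and 2p ≥ M − 1, and set μ = p/M. Then (a) the one-shot NDT satisfies δ_OS(μ) = 1, and (b) every admissible pair (ℓ,s) satisfies δ_LB(μ,ℓ,s) ≤ 1, so the Theorem-1 lower bound max{1, max over admissible (ℓ,s) of δ_LB(μ,ℓ,s)} equals 1. Hence the one-shot scheme achieves the minimum NDT δ*(μ) = 1 in this regime (Corollary 1). -/

import Mathlib

/-- The family of lower bounds on the NDT from Theorem 1:
`δ_LB(μ,ℓ,s) = (K + ℓ − μ·(s̄·(K − s + (s̄−1)/2) + ℓ(ℓ+1)/2))/s` with `s̄ = M+1−s`. -/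
noncomputable def deltaLB (K M : ℕ) (μ : ℝ) (ℓ s : ℕ) : ℝ :=
  ((K : ℝ) + ℓ -
      μ * (((M : ℝ) + 1 - s) * ((K : ℝ) - s + ((M : ℝ) + 1 - s - 1) / 2) +
        (ℓ : ℝ) * ((ℓ : ℝ) + 1) / 2)) / s

/-- A pair `(ℓ,s)` is admissible if `1 ≤ s ≤ min(M+1,K)` and `M+1−s ≤ ℓ ≤ M`. -/
def Admissible (K M : ℕ) (ℓ s : ℕ) : Prop :=
  1 ≤ s ∧ s ≤ min (M + 1) K ∧ M + 1 - s ≤ ℓ ∧ ℓ ≤ M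

/-- Supremum of the lower-bound family `δ_LB(μ,ℓ,s)` over admissible pairs `(ℓ,s)`. -/
noncomputable def lbSup (K M : ℕ) (μ : ℝ) : ℝ :=
  sSup {x : ℝ | ∃ ℓ s : ℕ, Admissible K M ℓ s ∧ x = deltaLB K M μ ℓ s}

/-- The Maddah-Ali–Niesen NDT at fractional cache size μ = p/M:
δ_MAN = (M − p)/(1 + p). -/
noncomputable def deltaMAN (M p : ℕ) : ℝ := ((M : ℝ) - p) / (1 + p)

/-- The achievable one-shot NDT of Theorem 2 at fractional cache size μ = p/M:
δ_OS = max{δ_MAN, (K + δ_MAN·𝟙[K>p]) / min(K, 1+p)}. -/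
noncomputable def deltaOS (K M p : ℕ) : ℝ :=
  max (deltaMAN M p)
    (((K : ℝ) + deltaMAN M p * (if p < K then 1 else 0)) / min (K : ℝ) (1 + (p : ℝ)))

/-!
With `s̄ = M + 1 - s`, the bound `δ_LB ≤ 1` amounts to
`K + ℓ - s ≤ μ · (s̄ (K - s) + s̄ (s̄ - 1)/2 + ℓ (ℓ + 1)/2)`. Two elementary facts give it:
`s̄ ℓ ≤ s̄ (s̄ - 1)/2 + ℓ (ℓ + 1)/2` because `ℓ ≥ s̄`, and `μ s̄ ≥ 1` because `s ≤ K ≤ p` and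
`p (M + 1 - p) ≥ M`. For the one-shot NDT, `K ≤ p` kills the indicator and makes the second term
`K / K = 1`, while `2p ≥ M - 1` makes `δ_MAN ≤ 1`.
-/

/-- The difference of the two sides is `(b - a)(b - a + 1)/2`. -/
lemma mul_le_half_sub_add_half_add {a b : ℝ} (h : a ≤ b) :
    a * b ≤ a * (a - 1) / 2 + b * (b + 1) / 2 := by
  nlinarith [mul_nonneg (sub_nonneg.2 h) (by linarith : (0 : ℝ) ≤ b - a + 1)]

lemma le_mul_add_one_sub {p M : ℝ} (hp : 1 ≤ p) (hpM : p ≤ M) : M ≤ p * (M + 1 - p) := by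
  nlinarith [mul_nonneg (sub_nonneg.2 hp) (sub_nonneg.2 hpM)]

lemma one_le_div_mul_add_one_sub {p M s : ℝ} (hs : s ≤ p) (hp : 1 ≤ p) (hpM : p ≤ M) :
    1 ≤ p / M * (M + 1 - s) := by
  have hM : 0 < M := by linarith
  rw [div_mul_eq_mul_div, le_div_iff₀ hM, one_mul]
  calc M ≤ p * (M + 1 - p) := le_mul_add_one_sub hp hpM
    _ ≤ p * (M + 1 - s) := by gcongr

lemma deltaMAN_le_one {M p : ℕ} (h : M - 1 ≤ 2 * p) : deltaMAN M p ≤ 1 := by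
  have hM : (M : ℝ) ≤ 2 * p + 1 := by exact_mod_cast (by omega : M ≤ 2 * p + 1)
  rw [deltaMAN, div_le_one (by positivity)]
  linarith

lemma deltaOS_eq_one {K M p : ℕ} (hK : 1 ≤ K) (hKp : K ≤ p) (h2p : M - 1 ≤ 2 * p) :
    deltaOS K M p = 1 := by
  have hKr : (1 : ℝ) ≤ K := by exact_mod_cast hK
  have hKpr : (K : ℝ) ≤ p := by exact_mod_cast hKp
  rw [deltaOS, if_neg hKp.not_gt, mul_zero, add_zero, min_eq_left (by linarith),
    div_self (by positivity), max_eq_right (deltaMAN_le_one h2p)]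

lemma deltaLB_le_one {K M p ℓ s : ℕ} (hKp : K ≤ p) (hpM : p ≤ M) (h : Admissible K M ℓ s) :
    deltaLB K M ((p : ℝ) / M) ℓ s ≤ 1 := by
  obtain ⟨hs, hsMK, hℓ, -⟩ := h
  have hsK : s ≤ K := hsMK.trans (min_le_right _ _)
  have hsr : (1 : ℝ) ≤ s := by exact_mod_cast hs
  have hsKr : (s : ℝ) ≤ K := by exact_mod_cast hsK
  have hsp : (s : ℝ) ≤ p := by exact_mod_cast hsK.trans hKp
  have hp : (1 : ℝ) ≤ p := by exact_mod_cast hs.trans (hsK.trans hKp)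
  have hpMr : (p : ℝ) ≤ M := by exact_mod_cast hpM
  have hℓr : (M : ℝ) + 1 - s ≤ ℓ := by
    have : ((M + 1 - s : ℕ) : ℝ) ≤ ℓ := by exact_mod_cast hℓ
    rwa [Nat.cast_sub (by omega), Nat.cast_add, Nat.cast_one] at this
  set μ : ℝ := (p : ℝ) / M
  set sb : ℝ := (M : ℝ) + 1 - s
  have hμ : 0 ≤ μ := by positivity
  have hμsb : 1 ≤ μ * sb := one_le_div_mul_add_one_sub hsp hp hpMr
  rw [deltaLB, div_le_one (by positivity), sub_le_comm]
  calc (K : ℝ) + ℓ - s ≤ μ * sb * (K + ℓ - s) := le_mul_of_one_le_left (by linarith) hμsb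
    _ = μ * (sb * (K - s) + sb * ℓ) := by ring
    _ ≤ μ * (sb * (K - s) + (sb * (sb - 1) / 2 + ℓ * (ℓ + 1) / 2)) := by
      gcongr
      exact mul_le_half_sub_add_half_add hℓr
    _ = μ * (sb * (K - s + (sb - 1) / 2) + ℓ * (ℓ + 1) / 2) := by ring

lemma lbSup_le_one {K M p : ℕ} (hKp : K ≤ p) (hpM : p ≤ M) : lbSup K M ((p : ℝ) / M) ≤ 1 :=
  Real.sSup_le (fun _ ⟨_, _, h, hx⟩ => hx ▸ deltaLB_le_one hKp hpM h) zero_le_one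

/-- Corollary 1: for 1 ≤ K ≤ p ≤ M with 2p ≥ M − 1 and μ = p/M,
the one-shot NDT equals 1, every admissible pair gives δ_LB ≤ 1, and the Theorem-1
lower bound max{1, max over admissible (ℓ,s)} equals 1; hence δ*(μ) = 1. -/
theorem stmt18 (K M p : ℕ) (hK : 1 ≤ K) (hKp : K ≤ p) (hpM : p ≤ M)
    (h2p : M - 1 ≤ 2 * p) :
    deltaOS K M p = 1 ∧
    (∀ ℓ s : ℕ, Admissible K M ℓ s → deltaLB K M ((p : ℝ) / M) ℓ s ≤ 1) ∧
    max 1 (lbSup K M ((p : ℝ) / M)) = 1 :=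
  ⟨deltaOS_eq_one hK hKp h2p, fun _ _ => deltaLB_le_one hKp hpM,
    max_eq_left (lbSup_le_one hKp hpM)⟩
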